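/- arXiv:1908.05726 — 4 statements merged into one kernel-verified Lean document; each statement's English description precedes it below -/
import Mathlib

section
/- Let $\tau^2 > 0$, $\sigma^2 > 0$, $\alpha > 1$, and suppose $\lambda_i^{(n)} \le C n i^{-\alpha}$ for all $1 \le i \le n$ and a constant $C > 0$. With $a_{ni} = 1/(\tau^2 + \sigma^2 \lambda_i^{(n)})$, there exists $C' > 0$ such that $\sum_{i=1}^n \lambda_i^{(n)} a_{ni}^2 \le C' n^{1/\alpha}$ for all $n \ge 1$. -/
/-!
Each summand `λ / (τ² + σ² λ)²` is at most `1 / (4 σ² τ²)` by AM–GM, and at most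
`λ / τ⁴ ≤ C n i^{-α} / τ⁴`. Use the first bound for `i ≤ m := ⌈n^{1/α}⌉` and the second for
`i > m`, where comparison with `∫_m^∞ x^{-α} dx` bounds the tail by `C n m^{1-α} / ((α - 1) τ⁴)`.
Both pieces are `O(n^{1/α})`, since `n · (n^{1/α})^{1-α} = n^{1/α}`.
-/

open Finset

lemma sum_Ioc_rpow_neg_le {α : ℝ} (hα : 1 < α) {m n : ℕ} (hm : 0 < m) (hmn : m ≤ n) :
    ∑ i ∈ Ioc m n, (i : ℝ) ^ (-α) ≤ (m : ℝ) ^ (1 - α) / (α - 1) := by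
  have hm₀ : (0 : ℝ) < m := by exact_mod_cast hm
  have hanti : AntitoneOn (fun x : ℝ => x ^ (-α)) (Set.Icc (m : ℝ) n) :=
    fun x hx y _ hxy => Real.rpow_le_rpow_of_nonpos (hm₀.trans_le hx.1) hxy (by linarith)
  have hzero : (0 : ℝ) ∉ Set.uIcc (m : ℝ) n := by
    rw [Set.uIcc_of_le (by exact_mod_cast hmn)]
    exact fun h => hm₀.not_ge h.1
  have hint : ∫ x in (m : ℝ)..n, x ^ (-α) =
      ((m : ℝ) ^ (1 - α) - (n : ℝ) ^ (1 - α)) / (α - 1) := by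
    rw [integral_rpow (Or.inr ⟨by linarith, hzero⟩), neg_add_eq_sub,
      div_eq_div_iff (by linarith) (by linarith)]
    ring
  calc ∑ i ∈ Ioc m n, (i : ℝ) ^ (-α) = ∑ i ∈ Ico m n, ((i + 1 : ℕ) : ℝ) ^ (-α) := by
        rw [← Ico_add_one_add_one_eq_Ioc, ← sum_Ico_add']
    _ ≤ ∫ x in (m : ℝ)..n, x ^ (-α) := hanti.sum_le_integral_Ico hmn
    _ ≤ (m : ℝ) ^ (1 - α) / (α - 1) := by
        rw [hint]
        gcongr
        exact sub_le_self _ (by positivity)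

lemma sum_Icc_le_rpow_one_div_of_le_rpow_neg {α A B : ℝ} (hα : 1 < α) (hA : 0 ≤ A) (hB : 0 ≤ B)
    {f : ℕ → ℝ} {n : ℕ} (hn : 1 ≤ n) (hfA : ∀ i ∈ Icc 1 n, f i ≤ A)
    (hfB : ∀ i ∈ Icc 1 n, f i ≤ B * n * (i : ℝ) ^ (-α)) :
    ∑ i ∈ Icc 1 n, f i ≤ (2 * A + B / (α - 1)) * (n : ℝ) ^ (1 / α) := by
  have hn₁ : (1 : ℝ) ≤ n := by exact_mod_cast hn
  have hn_eq : (n : ℝ) = ((n : ℝ) ^ (1 / α)) ^ α := by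
    rw [one_div, Real.rpow_inv_rpow (by positivity) (by linarith)]
  set r := (n : ℝ) ^ (1 / α)
  have hr₁ : 1 ≤ r := Real.one_le_rpow hn₁ (by positivity)
  set m := ⌈r⌉₊
  have hm : 0 < m := Nat.ceil_pos.mpr (by linarith)
  have hmn : m ≤ n := Nat.ceil_le.mpr <|
    Real.rpow_le_self_of_one_le hn₁ ((div_le_one (by linarith)).mpr hα.le)
  have hmr : (m : ℝ) ≤ 2 * r := by linarith [Nat.ceil_lt_add_one (by linarith : 0 ≤ r)]
  have hnr : (n : ℝ) * r ^ (1 - α) = r := by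
    rw [hn_eq, ← Real.rpow_add (by linarith), add_sub_cancel, Real.rpow_one]
  have head : ∑ i ∈ Icc 1 m, f i ≤ m * A := by
    simpa using sum_le_card_nsmul _ _ A fun i hi =>
      hfA i (Icc_subset_Icc_right hmn hi)
  have tail : ∑ i ∈ Ioc m n, f i ≤ B / (α - 1) * r := calc
    ∑ i ∈ Ioc m n, f i ≤ ∑ i ∈ Ioc m n, B * n * (i : ℝ) ^ (-α) := sum_le_sum fun i hi =>
        hfB i (mem_Icc.mpr ⟨hm.trans (mem_Ioc.mp hi).1, (mem_Ioc.mp hi).2⟩)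
    _ = B * n * ∑ i ∈ Ioc m n, (i : ℝ) ^ (-α) := (mul_sum ..).symm
    _ ≤ B * n * ((m : ℝ) ^ (1 - α) / (α - 1)) := by gcongr; exact sum_Ioc_rpow_neg_le hα hm hmn
    _ ≤ B * n * (r ^ (1 - α) / (α - 1)) := by
        gcongr B * n * (?_ / _)
        exact Real.rpow_le_rpow_of_nonpos (by positivity) (Nat.le_ceil r) (by linarith)
    _ = B / (α - 1) * (n * r ^ (1 - α)) := by ring
    _ = B / (α - 1) * r := by rw [hnr]
  calc ∑ i ∈ Icc 1 n, f i = ∑ i ∈ Icc 1 m, f i + ∑ i ∈ Ioc m n, f i := by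
        rw [← zero_add 1, Icc_add_one_left_eq_Ioc, Icc_add_one_left_eq_Ioc,
          sum_Ioc_consecutive _ m.zero_le hmn]
    _ ≤ 2 * r * A + B / (α - 1) * r := add_le_add (head.trans (by gcongr)) tail
    _ = (2 * A + B / (α - 1)) * r := by ring

lemma mul_one_div_add_mul_sq_le_one_div_four_mul {a b x : ℝ} (ha : 0 < a) (hb : 0 < b)
    (hx : 0 ≤ x) : x * (1 / (a + b * x)) ^ 2 ≤ 1 / (4 * a * b) := by
  rw [div_pow, one_pow, mul_one_div, div_le_div_iff₀ (by positivity) (by positivity)]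
  nlinarith [sq_nonneg (a - b * x)]

lemma mul_one_div_add_mul_sq_le_div_sq {a b x : ℝ} (ha : 0 < a) (hb : 0 ≤ b) (hx : 0 ≤ x) :
    x * (1 / (a + b * x)) ^ 2 ≤ x / a ^ 2 := by
  rw [div_pow, one_pow, mul_one_div]
  gcongr
  linarith [mul_nonneg hb hx]

/-- `∑ λᵢ aₙᵢ² ≤ C' n^(1/α)` under the eigenvalue bound `λᵢ ≤ C n i^(-α)`. -/
theorem stmt1
    (τ2 σ2 α : ℝ) (hτ : 0 < τ2) (hσ : 0 < σ2) (hα : 1 < α)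
    (lam : ℕ → ℕ → ℝ)
    (hpos : ∀ n i, 1 ≤ i → i ≤ n → 0 < lam n i)
    (C : ℝ) (hC : 0 < C)
    (hub : ∀ n i, 1 ≤ i → i ≤ n → lam n i ≤ C * n * (i : ℝ) ^ (-α)) :
    ∃ C' : ℝ, 0 < C' ∧ ∀ n : ℕ, 1 ≤ n →
      ∑ i ∈ Finset.Icc 1 n, lam n i * (1 / (τ2 + σ2 * lam n i)) ^ 2
        ≤ C' * (n : ℝ) ^ (1 / α) := by
  refine ⟨2 * (1 / (4 * τ2 * σ2)) + C / τ2 ^ 2 / (α - 1),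
    add_pos (by positivity) (div_pos (by positivity) (sub_pos.mpr hα)), fun n hn => ?_⟩
  refine sum_Icc_le_rpow_one_div_of_le_rpow_neg hα (by positivity) (by positivity) hn
    (fun i hi => ?_) (fun i hi => ?_)
  all_goals obtain ⟨hi₁, hin⟩ := mem_Icc.mp hi
  · exact mul_one_div_add_mul_sq_le_one_div_four_mul hτ hσ (hpos n i hi₁ hin).le
  · calc lam n i * (1 / (τ2 + σ2 * lam n i)) ^ 2 ≤ lam n i / τ2 ^ 2 :=
          mul_one_div_add_mul_sq_le_div_sq hτ hσ.le (hpos n i hi₁ hin).le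
      _ ≤ C * n * (i : ℝ) ^ (-α) / τ2 ^ 2 := by gcongr; exact hub n i hi₁ hin
      _ = C / τ2 ^ 2 * n * (i : ℝ) ^ (-α) := by ring
end

section
/- Let $\tau^2 > 0$, $\sigma^2 > 0$, $\alpha > 1$, and suppose $\lambda_i^{(n)} \le C n i^{-\alpha}$ for all $1 \le i \le n$. With $a_{ni} = 1/(\tau^2 + \sigma^2\lambda_i^{(n)})$, there exists $C' > 0$ such that $\sum_{i=1}^n (\lambda_i^{(n)})^2 a_{ni}^4 \le C' n^{1/\alpha}$ for all $n$. -/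
/-!
Since `x / (τ + σ x) ≤ 1 / σ`, every term is bounded by a constant, and since
`1 / (τ + σ x) ≤ 1 / τ`, the `i`-th term is also at most `(C n i^(-α))² / τ⁴`. Split the
sum at `r = n^(1/α)`: the at most `r` terms with `i ≤ r` contribute `O(r)`, and the tail is
`O(n² ∑_{i > r} i^(-2α)) = O(n² r^(1 - 2α)) = O(r)` because `r^α = n`.
-/

open Finset

theorem sq_mul_one_div_add_mul_pow_four_le_inv {τ σ x : ℝ} (hτ : 0 < τ) (hσ : 0 < σ)
    (hx : 0 ≤ x) : x ^ 2 * (1 / (τ + σ * x)) ^ 4 ≤ (σ ^ 2 * τ ^ 2)⁻¹ := by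
  have h : x / (τ + σ * x) ^ 2 ≤ 1 / (σ * τ) := by
    rw [div_le_div_iff₀ (by positivity) (by positivity)]
    nlinarith [sq_nonneg (τ - σ * x), mul_nonneg hσ.le hx]
  calc x ^ 2 * (1 / (τ + σ * x)) ^ 4 = (x / (τ + σ * x) ^ 2) ^ 2 := by field_simp
    _ ≤ (1 / (σ * τ)) ^ 2 := pow_le_pow_left₀ (by positivity) h 2
    _ = (σ ^ 2 * τ ^ 2)⁻¹ := by ring

theorem sq_mul_one_div_add_mul_pow_four_le_sq_div {τ σ x M : ℝ} (hτ : 0 < τ) (hσ : 0 ≤ σ)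
    (hx : 0 ≤ x) (hxM : x ≤ M) : x ^ 2 * (1 / (τ + σ * x)) ^ 4 ≤ M ^ 2 / τ ^ 4 := by
  have ha : 1 / (τ + σ * x) ≤ 1 / τ :=
    one_div_le_one_div_of_le hτ (le_add_of_nonneg_right (mul_nonneg hσ hx))
  calc x ^ 2 * (1 / (τ + σ * x)) ^ 4 ≤ M ^ 2 * (1 / τ) ^ 4 :=
        mul_le_mul (pow_le_pow_left₀ hx hxM 2) (pow_le_pow_left₀ (by positivity) ha 4)
          (by positivity) (by positivity)
    _ = M ^ 2 / τ ^ 4 := by ring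

theorem sum_Ioc_floor_rpow_neg_le {r β : ℝ} (hr : 0 < r) (hβ : 2 ≤ β) (n : ℕ) :
    ∑ i ∈ Ioc ⌊r⌋₊ n, (i : ℝ) ^ (-β) ≤ 2 * r ^ (1 - β) := by
  have hterm :
      ∀ i ∈ Ioc ⌊r⌋₊ n, (i : ℝ) ^ (-β) ≤ r ^ (2 - β) * ((i : ℝ) ^ 2)⁻¹ := by
    intro i hi
    have hri : r < i := Nat.lt_of_floor_lt (mem_Ioc.1 hi).1
    have hi0 : (0 : ℝ) < i := hr.trans hri
    calc (i : ℝ) ^ (-β) = (i : ℝ) ^ (2 - β) * ((i : ℝ) ^ 2)⁻¹ := by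
          rw [← Real.rpow_natCast, ← Real.rpow_neg hi0.le, ← Real.rpow_add hi0]
          congr 1
          push_cast
          ring
      _ ≤ r ^ (2 - β) * ((i : ℝ) ^ 2)⁻¹ :=
          mul_le_mul_of_nonneg_right (Real.rpow_le_rpow_of_nonpos hr hri.le (by linarith))
            (by positivity)
  have hinv : ∑ i ∈ Ioc ⌊r⌋₊ n, ((i : ℝ) ^ 2)⁻¹ ≤ 2 / r := by
    rw [← Finset.Ioo_add_one_right_eq_Ioc]
    refine (sum_Ioo_inv_sq_le _ _).trans ?_
    gcongr
    exact (Nat.lt_floor_add_one r).le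
  calc ∑ i ∈ Ioc ⌊r⌋₊ n, (i : ℝ) ^ (-β)
      ≤ ∑ i ∈ Ioc ⌊r⌋₊ n, r ^ (2 - β) * ((i : ℝ) ^ 2)⁻¹ := sum_le_sum hterm
    _ ≤ r ^ (2 - β) * (2 / r) := by rw [← mul_sum]; gcongr
    _ = 2 * r ^ (1 - β) := by
        rw [show 2 - β = (1 - β) + 1 by ring, Real.rpow_add_one hr.ne']
        field_simp

theorem sum_Icc_le_of_le_of_le_rpow_neg {x : ℕ → ℝ} {n : ℕ} {r A B β : ℝ} (hr : 0 < r)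
    (hβ : 2 ≤ β) (hA : 0 ≤ A) (hB : 0 ≤ B) (hxA : ∀ i ∈ Icc 1 n, x i ≤ A)
    (hxB : ∀ i ∈ Icc 1 n, x i ≤ B * (i : ℝ) ^ (-β)) :
    ∑ i ∈ Icc 1 n, x i ≤ A * r + 2 * B * r ^ (1 - β) := by
  rw [← sum_filter_add_sum_filter_not (Icc 1 n) (· ≤ ⌊r⌋₊)]
  have hhead : ∑ i ∈ (Icc 1 n).filter (· ≤ ⌊r⌋₊), x i ≤ A * r := by
    have hcard : (((Icc 1 n).filter (· ≤ ⌊r⌋₊)).card : ℝ) ≤ r := by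
      refine le_trans ?_ (Nat.floor_le hr.le)
      exact_mod_cast (card_le_card fun i hi => by simp_all).trans (Nat.card_Icc 1 ⌊r⌋₊).le
    calc ∑ i ∈ (Icc 1 n).filter (· ≤ ⌊r⌋₊), x i
        ≤ ((Icc 1 n).filter (· ≤ ⌊r⌋₊)).card • A :=
          sum_le_card_nsmul _ _ _ fun i hi => hxA i (mem_filter.1 hi).1
      _ ≤ A * r := by rw [nsmul_eq_mul, mul_comm]; gcongr
  have htail : ∑ i ∈ (Icc 1 n).filter (¬ · ≤ ⌊r⌋₊), x i ≤ 2 * B * r ^ (1 - β) := by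
    calc ∑ i ∈ (Icc 1 n).filter (¬ · ≤ ⌊r⌋₊), x i
        ≤ ∑ i ∈ (Icc 1 n).filter (¬ · ≤ ⌊r⌋₊), B * (i : ℝ) ^ (-β) :=
          sum_le_sum fun i hi => hxB i (mem_filter.1 hi).1
      _ ≤ ∑ i ∈ Ioc ⌊r⌋₊ n, B * (i : ℝ) ^ (-β) :=
          sum_le_sum_of_subset_of_nonneg (fun i hi => by simp_all) fun _ _ _ => by positivity
      _ ≤ 2 * B * r ^ (1 - β) := by
          rw [← mul_sum]
          linarith [mul_le_mul_of_nonneg_left (sum_Ioc_floor_rpow_neg_le hr hβ n) hB]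
  exact add_le_add hhead htail

theorem sq_mul_rpow_one_div_rpow_one_sub_two_mul {x α : ℝ} (hx : 0 < x) (hα : α ≠ 0) :
    x ^ 2 * (x ^ (1 / α)) ^ (1 - 2 * α) = x ^ (1 / α) := by
  have hpow : (x ^ (1 / α)) ^ (2 * α) = x ^ 2 := by
    rw [← Real.rpow_mul hx.le, show 1 / α * (2 * α) = (2 : ℕ) by field_simp; norm_num,
      Real.rpow_natCast]
  rw [Real.rpow_sub (by positivity), Real.rpow_one, hpow]
  field_simp

theorem stmt4_general
    (τ2 σ2 α : ℝ) (hτ : 0 < τ2) (hσ : 0 < σ2) (hα : 1 < α)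
    (lam : ℕ → ℕ → ℝ)
    (hpos : ∀ n i, 1 ≤ i → i ≤ n → 0 < lam n i)
    (C : ℝ)
    (hub : ∀ n i, 1 ≤ i → i ≤ n → lam n i ≤ C * n * (i : ℝ) ^ (-α)) :
    ∃ C' : ℝ, 0 < C' ∧ ∀ n : ℕ,
      ∑ i ∈ Finset.Icc 1 n, (lam n i) ^ 2 * (1 / (τ2 + σ2 * lam n i)) ^ 4
        ≤ C' * (n : ℝ) ^ (1 / α) := by
  refine ⟨(σ2 ^ 2 * τ2 ^ 2)⁻¹ + 2 * (C ^ 2 / τ2 ^ 4), by positivity, fun n => ?_⟩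
  rcases n.eq_zero_or_pos with rfl | hn
  · simp [Real.zero_rpow, (zero_lt_one.trans hα).ne']
  set r := (n : ℝ) ^ (1 / α)
  have hr : 0 < r := by positivity
  calc ∑ i ∈ Icc 1 n, lam n i ^ 2 * (1 / (τ2 + σ2 * lam n i)) ^ 4
      ≤ (σ2 ^ 2 * τ2 ^ 2)⁻¹ * r + 2 * (C ^ 2 * n ^ 2 / τ2 ^ 4) * r ^ (1 - 2 * α) := by
        refine sum_Icc_le_of_le_of_le_rpow_neg hr (by linarith) (by positivity) (by positivity)
          (fun i hi => ?_) (fun i hi => ?_) <;> obtain ⟨hi1, hin⟩ := mem_Icc.1 hi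
        · exact sq_mul_one_div_add_mul_pow_four_le_inv hτ hσ (hpos n i hi1 hin).le
        · calc lam n i ^ 2 * (1 / (τ2 + σ2 * lam n i)) ^ 4
              ≤ (C * n * (i : ℝ) ^ (-α)) ^ 2 / τ2 ^ 4 :=
                sq_mul_one_div_add_mul_pow_four_le_sq_div hτ hσ.le (hpos n i hi1 hin).le
                  (hub n i hi1 hin)
            _ = C ^ 2 * n ^ 2 / τ2 ^ 4 * (i : ℝ) ^ (-(2 * α)) := by
                rw [show -(2 * α) = -α * (2 : ℕ) by push_cast; ring,
                  Real.rpow_mul_natCast i.cast_nonneg]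
                ring
    _ = (σ2 ^ 2 * τ2 ^ 2)⁻¹ * r + 2 * (C ^ 2 / τ2 ^ 4) * ((n : ℝ) ^ 2 * r ^ (1 - 2 * α)) :=
        by ring
    _ = ((σ2 ^ 2 * τ2 ^ 2)⁻¹ + 2 * (C ^ 2 / τ2 ^ 4)) * r := by
        rw [sq_mul_rpow_one_div_rpow_one_sub_two_mul (by positivity) (zero_lt_one.trans hα).ne']
        ring

/-- `∑ (λᵢ)² aₙᵢ⁴ ≤ C' n^(1/α)` with `aₙᵢ = 1/(τ² + σ² λᵢ)`,
under the eigenvalue bound `λᵢ ≤ C n i^(-α)`. -/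
theorem stmt4
    (τ2 σ2 α : ℝ) (hτ : 0 < τ2) (hσ : 0 < σ2) (hα : 1 < α)
    (lam : ℕ → ℕ → ℝ)
    (hpos : ∀ n i, 1 ≤ i → i ≤ n → 0 < lam n i)
    (C : ℝ) (hC : 0 < C)
    (hub : ∀ n i, 1 ≤ i → i ≤ n → lam n i ≤ C * n * (i : ℝ) ^ (-α)) :
    ∃ C' : ℝ, 0 < C' ∧ ∀ n : ℕ,
      ∑ i ∈ Finset.Icc 1 n, (lam n i) ^ 2 * (1 / (τ2 + σ2 * lam n i)) ^ 4
        ≤ C' * (n : ℝ) ^ (1 / α) :=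
  stmt4_general τ2 σ2 α hτ hσ hα lam hpos C hub
end

section
/- Let $W_1, W_2, \ldots$ be i.i.d. standard normal random variables, and for each $n$ let $c_{n1}, \ldots, c_{nn}$ be nonnegative reals with $S_n := \sum_{i=1}^n c_{ni} \to \infty$ and $\max_{1 \le i \le n} c_{ni} \le M$ for a constant $M$. Then $\frac{1}{S_n} \sum_{i=1}^n c_{ni} W_i^2 \to 1$ almost surely, provided $S_n \ge \delta n^{\gamma}$ for some $\delta, \gamma > 0$. -/
/-!
By Chernoff's method. For a standard normal `W` and `|u| ≤ 1/4`,
`E exp (u W²) = (1 - 2u)^(-1/2) ≤ exp (u + 4u²)`, so by independence the weighted sum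
`Tₙ = ∑ cₙᵢ Wᵢ²` with `0 ≤ cₙᵢ ≤ M` satisfies `E exp (t Tₙ) ≤ exp (t Sₙ + 4 M Sₙ t²)` for
`|t| M ≤ 1/4`. Taking `t = ± ε / (8M)` gives
`P(|Tₙ - Sₙ| ≥ ε Sₙ) ≤ 2 exp (-ε² Sₙ / (16M)) ≤ 2 exp (-ε² δ nᵞ / (16M))`, which is summable
in `n`; Borel–Cantelli for each `ε = 1/(k+1)` gives `Tₙ / Sₙ → 1` almost surely.
-/

open MeasureTheory ProbabilityTheory Filter Finset Real

lemma inv_sqrt_one_sub_two_mul_le_exp {u : ℝ} (hu : |u| ≤ 1 / 4) :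
    (√(1 - 2 * u))⁻¹ ≤ exp (u + 4 * u ^ 2) := by
  obtain ⟨hu₁, hu₂⟩ := abs_le.1 hu
  have hpos : 0 < 1 - 2 * u := by linarith
  have key : 1 ≤ (1 - 2 * u) * (exp (u + 4 * u ^ 2) * exp (u + 4 * u ^ 2)) := calc
    1 ≤ (1 - 2 * u) * (2 * (u + 4 * u ^ 2) + 1) := by nlinarith
    _ ≤ _ := by
      rw [← exp_add, ← two_mul]
      gcongr
      exact add_one_le_exp _
  rw [inv_le_iff_one_le_mul₀' (sqrt_pos.2 hpos), ← sqrt_mul_self (exp_nonneg _),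
    ← sqrt_mul hpos.le]
  exact one_le_sqrt.2 key

-- For `s ≥ 1/2` both sides are junk `0`: the integrand is not integrable and `√` of a
-- nonpositive number is `0`.
lemma integral_exp_mul_sq_gaussianReal (s : ℝ) :
    ∫ x, exp (s * x ^ 2) ∂gaussianReal 0 1 = (√(1 - 2 * s))⁻¹ := by
  have hpdf : ∀ x, gaussianPDFReal 0 1 x • exp (s * x ^ 2)
      = (√(2 * π))⁻¹ * exp (-(1 / 2 - s) * x ^ 2) := fun x => by
    simp only [gaussianPDFReal, smul_eq_mul, mul_assoc, ← exp_add, NNReal.coe_one, mul_one,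
      sub_zero]
    ring_nf
  rw [integral_gaussianReal_eq_integral_smul one_ne_zero]
  simp_rw [hpdf]
  rw [integral_const_mul, integral_gaussian, ← sqrt_inv, ← sqrt_mul (by positivity), ← sqrt_inv]
  congr 1
  field_simp

lemma mgf_sq_of_hasLaw_gaussianReal {Ω : Type*} [MeasurableSpace Ω] {P : Measure Ω}
    {X : Ω → ℝ} (hX : HasLaw X (gaussianReal 0 1) P) (t : ℝ) :
    mgf (fun ω => X ω ^ 2) P t = (√(1 - 2 * t))⁻¹ := by
  rw [← integral_exp_mul_sq_gaussianReal t, ← hX.integral_comp (by fun_prop)]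
  rfl

lemma measureReal_le_abs_sub_le_two_mul_exp {Ω : Type*} [MeasurableSpace Ω] {P : Measure Ω}
    [IsFiniteMeasure P] {X : Ω → ℝ} {m K t : ℝ} (r : ℝ) (ht : 0 ≤ t)
    (hint : ∀ u, |u| = t → Integrable (fun ω => exp (u * X ω)) P)
    (hmgf : ∀ u, |u| = t → mgf X P u ≤ exp (u * m + K * u ^ 2)) :
    P.real {ω | r ≤ |X ω - m|} ≤ 2 * exp (-t * r + K * t ^ 2) := by
  have habs : |-t| = t := by rw [abs_neg, abs_of_nonneg ht]
  have hupper : P.real {ω | m + r ≤ X ω} ≤ exp (-t * r + K * t ^ 2) := calc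
    _ ≤ exp (-t * (m + r)) * mgf X P t :=
      measure_ge_le_exp_mul_mgf _ ht (hint t (abs_of_nonneg ht))
    _ ≤ exp (-t * (m + r)) * exp (t * m + K * t ^ 2) := by
      gcongr; exact hmgf t (abs_of_nonneg ht)
    _ = _ := by rw [← exp_add]; ring_nf
  have hlower : P.real {ω | X ω ≤ m - r} ≤ exp (-t * r + K * t ^ 2) := calc
    _ ≤ exp (-(-t) * (m - r)) * mgf X P (-t) :=
      measure_le_le_exp_mul_mgf _ (by linarith) (hint (-t) habs)
    _ ≤ exp (-(-t) * (m - r)) * exp (-t * m + K * (-t) ^ 2) := by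
      gcongr; exact hmgf (-t) habs
    _ = _ := by rw [← exp_add]; ring_nf
  have hsub : {ω | r ≤ |X ω - m|} ⊆ {ω | m + r ≤ X ω} ∪ {ω | X ω ≤ m - r} := fun ω hω => by
    rcases le_abs'.1 (show r ≤ |X ω - m| from hω) with h | h
    · right; simp only [Set.mem_ofPred_eq]; linarith
    · left; simp only [Set.mem_ofPred_eq]; linarith
  calc _ ≤ P.real ({ω | m + r ≤ X ω} ∪ {ω | X ω ≤ m - r}) := measureReal_mono hsub
    _ ≤ P.real {ω | m + r ≤ X ω} + P.real {ω | X ω ≤ m - r} := measureReal_union_le _ _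
    _ ≤ _ := by linarith

lemma summable_exp_neg_mul_rpow {b γ : ℝ} (hb : 0 < b) (hγ : 0 < γ) :
    Summable fun n : ℕ => exp (-b * (n : ℝ) ^ γ) := by
  have hlim : Tendsto (fun x : ℝ => x ^ (2 : ℝ) * exp (-b * x ^ γ)) atTop (nhds 0) := by
    refine ((tendsto_rpow_mul_exp_neg_mul_atTop_nhds_zero (2 / γ) b hb).comp
      (tendsto_rpow_atTop hγ)).congr' ?_
    filter_upwards [eventually_ge_atTop 0] with x hx
    rw [Function.comp_apply, ← rpow_mul hx, mul_div_cancel₀ _ hγ.ne']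
  have hO : (fun x : ℝ => exp (-b * x ^ γ)) =O[atTop] fun x => x ^ (-2 : ℝ) := by
    refine (Asymptotics.isLittleO_of_tendsto' ?_ ?_).isBigO
    · filter_upwards [eventually_gt_atTop 0] with x hx h
      exact absurd h (by positivity)
    · refine hlim.congr' ?_
      filter_upwards [eventually_ge_atTop 0] with x hx
      rw [rpow_neg hx, div_inv_eq_mul, mul_comm]
  exact summable_of_isBigO_nat (summable_nat_rpow.2 (by norm_num))
    (hO.comp_tendsto tendsto_natCast_atTop_atTop)

lemma ae_eventually_notMem_of_measureReal_le {α : Type*} [MeasurableSpace α] {μ : Measure α}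
    [IsFiniteMeasure μ] {s : ℕ → Set α} {f : ℕ → ℝ} (hf : Summable f)
    (hs : ∀ n, μ.real (s n) ≤ f n) : ∀ᵐ x ∂μ, ∀ᶠ n in atTop, x ∉ s n := by
  have hf0 : ∀ n, 0 ≤ f n := fun n => measureReal_nonneg.trans (hs n)
  refine ae_eventually_notMem (ne_top_of_le_ne_top (ENNReal.ofReal_ne_top (r := ∑' n, f n)) ?_)
  rw [ENNReal.ofReal_tsum_of_nonneg hf0 hf]
  refine ENNReal.tsum_le_tsum fun n => ?_
  rw [← ofReal_measureReal]
  exact ENNReal.ofReal_le_ofReal (hs n)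

lemma tendsto_one_div_mul_of_forall_eventually_abs_sub_lt {α : Type*} {l : Filter α}
    {S T : α → ℝ} (hS : ∀ᶠ n in l, 0 < S n)
    (h : ∀ k : ℕ, ∀ᶠ n in l, |T n - S n| < 1 / ((k : ℝ) + 1) * S n) :
    Tendsto (fun n => 1 / S n * T n) l (nhds 1) := by
  refine Metric.tendsto_nhds.2 fun ε hε => ?_
  obtain ⟨k, hk⟩ := exists_nat_one_div_lt hε
  filter_upwards [hS, h k] with n hSn hn
  rw [dist_eq, show 1 / S n * T n - 1 = (T n - S n) / S n by field_simp, abs_div,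
    abs_of_pos hSn, div_lt_iff₀ hSn]
  exact hn.trans_le (by gcongr)

section WeightedChiSquared

variable {Ω ι : Type*} [MeasurableSpace Ω] {P : Measure Ω} {W : ι → Ω → ℝ}

lemma mgf_sum_mul_sq_eq_prod (hW : iIndepFun W P)
    (hlaw : ∀ i, HasLaw (W i) (gaussianReal 0 1) P) (s : Finset ι) (a : ι → ℝ) (t : ℝ) :
    mgf (fun ω => ∑ i ∈ s, a i * W i ω ^ 2) P t = ∏ i ∈ s, (√(1 - 2 * (a i * t)))⁻¹ := by
  have hindep : iIndepFun (fun i ω => a i * W i ω ^ 2) P :=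
    hW.comp (fun i x => a i * x ^ 2) (fun i => by fun_prop)
  have hsum : (fun ω => ∑ i ∈ s, a i * W i ω ^ 2) = ∑ i ∈ s, fun ω => a i * W i ω ^ 2 := by
    ext ω; simp only [Finset.sum_apply]
  rw [hsum, hindep.mgf_sum₀ (fun i => by have := (hlaw i).aemeasurable; fun_prop)]
  refine prod_congr rfl fun i _ => ?_
  rw [mgf_const_mul, mgf_sq_of_hasLaw_gaussianReal (hlaw i)]

lemma mgf_sum_mul_sq_le (hW : iIndepFun W P)
    (hlaw : ∀ i, HasLaw (W i) (gaussianReal 0 1) P) {s : Finset ι} {a : ι → ℝ} {M t : ℝ}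
    (ha : ∀ i ∈ s, 0 ≤ a i) (haM : ∀ i ∈ s, a i ≤ M) (ht : |t| * M ≤ 1 / 4) :
    mgf (fun ω => ∑ i ∈ s, a i * W i ω ^ 2) P t
      ≤ exp (t * ∑ i ∈ s, a i + 4 * M * (∑ i ∈ s, a i) * t ^ 2) := by
  rw [mgf_sum_mul_sq_eq_prod hW hlaw, mul_sum, mul_sum, sum_mul, ← sum_add_distrib, exp_sum]
  refine prod_le_prod (fun i _ => by positivity) fun i hi => ?_
  have hsmall : |a i * t| ≤ 1 / 4 := by
    rw [abs_mul, abs_of_nonneg (ha i hi), mul_comm]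
    exact le_trans (by gcongr; exact haM i hi) ht
  calc (√(1 - 2 * (a i * t)))⁻¹ ≤ exp (a i * t + 4 * (a i * t) ^ 2) :=
        inv_sqrt_one_sub_two_mul_le_exp hsmall
    _ ≤ exp (t * a i + 4 * M * a i * t ^ 2) := by
      refine exp_le_exp.2 ?_
      nlinarith [mul_le_mul_of_nonneg_right (haM i hi) (mul_nonneg (ha i hi) (sq_nonneg t))]

lemma integrable_exp_mul_sum_mul_sq (hW : iIndepFun W P)
    (hlaw : ∀ i, HasLaw (W i) (gaussianReal 0 1) P) {s : Finset ι} {a : ι → ℝ} {t : ℝ}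
    (hat : ∀ i ∈ s, a i * t < 1 / 2) :
    Integrable (fun ω => exp (t * ∑ i ∈ s, a i * W i ω ^ 2)) P := by
  have := hW.isProbabilityMeasure
  rw [← mgf_pos_iff, mgf_sum_mul_sq_eq_prod hW hlaw]
  exact prod_pos fun i hi => inv_pos.2 (sqrt_pos.2 (by linarith [hat i hi]))

lemma measureReal_le_abs_sum_mul_sq_sub_le (hW : iIndepFun W P)
    (hlaw : ∀ i, HasLaw (W i) (gaussianReal 0 1) P) {s : Finset ι} {a : ι → ℝ} {M ε : ℝ}
    (ha : ∀ i ∈ s, 0 ≤ a i) (haM : ∀ i ∈ s, a i ≤ M) (hM : 0 < M) (hε : 0 < ε) (hε2 : ε ≤ 2) :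
    P.real {ω | ε * ∑ i ∈ s, a i ≤ |∑ i ∈ s, a i * W i ω ^ 2 - ∑ i ∈ s, a i|}
      ≤ 2 * exp (-(ε ^ 2 / (16 * M)) * ∑ i ∈ s, a i) := by
  have := hW.isProbabilityMeasure
  set t := ε / (8 * M)
  have ht : 0 ≤ t := by positivity
  have htM : t * M = ε / 8 := by simp only [t]; field_simp
  have hsmall : ∀ u, |u| = t → |u| * M ≤ 1 / 4 := fun u hu => by rw [hu, htM]; linarith
  have hint : ∀ u, |u| = t → Integrable (fun ω => exp (u * ∑ i ∈ s, a i * W i ω ^ 2)) P :=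
    fun u hu => integrable_exp_mul_sum_mul_sq hW hlaw fun i hi => calc
      a i * u ≤ |u| * M := by
        nlinarith [le_abs_self u, abs_nonneg u, ha i hi, haM i hi]
      _ < 1 / 2 := by linarith [hsmall u hu]
  calc _ ≤ 2 * exp (-t * (ε * ∑ i ∈ s, a i) + 4 * M * (∑ i ∈ s, a i) * t ^ 2) :=
        measureReal_le_abs_sub_le_two_mul_exp _ ht hint
          fun u hu => mgf_sum_mul_sq_le hW hlaw ha haM (hsmall u hu)
    _ = _ := by
      congr 2
      simp only [t]
      field_simp
      ring

lemma ae_eventually_abs_sum_mul_sq_sub_lt (hW : iIndepFun W P)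
    (hlaw : ∀ i, HasLaw (W i) (gaussianReal 0 1) P) {s : ℕ → Finset ι} {c : ℕ → ι → ℝ}
    {M δ γ ε : ℝ} (hc : ∀ n, ∀ i ∈ s n, 0 ≤ c n i) (hcM : ∀ n, ∀ i ∈ s n, c n i ≤ M)
    (hM : 0 < M) (hδ : 0 < δ) (hγ : 0 < γ)
    (hgrowth : ∀ n : ℕ, 1 ≤ n → δ * (n : ℝ) ^ γ ≤ ∑ i ∈ s n, c n i) (hε : 0 < ε) (hε2 : ε ≤ 2) :
    ∀ᵐ ω ∂P, ∀ᶠ n in atTop,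
      |∑ i ∈ s n, c n i * W i ω ^ 2 - ∑ i ∈ s n, c n i| < ε * ∑ i ∈ s n, c n i := by
  have := hW.isProbabilityMeasure
  have hb : 0 < ε ^ 2 * δ / (16 * M) := by positivity
  have hbound : ∀ n : ℕ, P.real {ω | ε * ∑ i ∈ s n, c n i
      ≤ |∑ i ∈ s n, c n i * W i ω ^ 2 - ∑ i ∈ s n, c n i|}
      ≤ 2 * exp (-(ε ^ 2 * δ / (16 * M)) * (n : ℝ) ^ γ) := by
    intro n
    rcases Nat.eq_zero_or_pos n with rfl | hn
    · rw [Nat.cast_zero, zero_rpow hγ.ne', mul_zero, exp_zero]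
      exact measureReal_le_one.trans (by norm_num)
    calc _ ≤ 2 * exp (-(ε ^ 2 / (16 * M)) * ∑ i ∈ s n, c n i) :=
          measureReal_le_abs_sum_mul_sq_sub_le hW hlaw (hc n) (hcM n) hM hε hε2
      _ ≤ _ := by
        have := hgrowth n hn
        gcongr 2 * exp ?_
        rw [neg_mul, neg_mul, neg_le_neg_iff, div_mul_eq_mul_div, mul_assoc, ← mul_div_right_comm]
        gcongr
  filter_upwards [ae_eventually_notMem_of_measureReal_le
    ((summable_exp_neg_mul_rpow hb hγ).mul_left 2) hbound] with ω hω
  filter_upwards [hω] with n hn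
  simpa using hn

end WeightedChiSquared

theorem stmt5_general
    {Ω : Type*} [MeasureSpace Ω]
    (W : ℕ → Ω → ℝ)
    (hWindep : iIndepFun W ℙ)
    (hWgauss : ∀ i, Measure.map (W i) ℙ = gaussianReal 0 1)
    (c : ℕ → ℕ → ℝ) (hc : ∀ (n i : ℕ), 0 ≤ c n i)
    (M : ℝ) (hM : ∀ (n i : ℕ), 1 ≤ i → i ≤ n → c n i ≤ M)
    (S : ℕ → ℝ) (hS : ∀ n, S n = ∑ i ∈ Finset.Icc 1 n, c n i)
    (δ γ : ℝ) (hδ : 0 < δ) (hγ : 0 < γ)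
    (hSlb : ∀ n : ℕ, 1 ≤ n → δ * (n : ℝ) ^ γ ≤ S n) :
    ∀ᵐ ω ∂(ℙ : Measure Ω),
      Tendsto (fun n => (1 / S n) * ∑ i ∈ Finset.Icc 1 n, c n i * (W i ω) ^ 2)
        atTop (nhds 1) := by
  obtain rfl : S = fun n => ∑ i ∈ Icc 1 n, c n i := funext hS
  have hM0 : 0 < M := by
    have := hSlb 1 le_rfl
    simp only [Nat.cast_one, one_rpow, mul_one, Icc_self, sum_singleton] at this
    linarith [hM 1 1 le_rfl le_rfl]
  have hlaw : ∀ i, HasLaw (W i) (gaussianReal 0 1) ℙ := fun i =>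
    ⟨.of_map_ne_zero (by rw [hWgauss i]; exact IsProbabilityMeasure.ne_zero _), hWgauss i⟩
  have hpos : ∀ᶠ n in atTop, 0 < ∑ i ∈ Icc 1 n, c n i :=
    eventually_atTop.2 ⟨1, fun n hn => (hSlb n hn).trans_lt' (by positivity)⟩
  have hclose : ∀ k : ℕ, ∀ᵐ ω ∂(ℙ : Measure Ω), ∀ᶠ n in atTop,
      |∑ i ∈ Icc 1 n, c n i * W i ω ^ 2 - ∑ i ∈ Icc 1 n, c n i|
        < 1 / ((k : ℝ) + 1) * ∑ i ∈ Icc 1 n, c n i := fun k =>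
    ae_eventually_abs_sum_mul_sq_sub_lt hWindep hlaw (fun n i _ => hc n i)
      (fun n i hi => hM n i (mem_Icc.1 hi).1 (mem_Icc.1 hi).2) hM0 hδ hγ hSlb (by positivity)
      ((div_le_one_of_le₀ (by simp) (by positivity)).trans one_le_two)
  filter_upwards [ae_all_iff.2 hclose] with ω hω
  exact tendsto_one_div_mul_of_forall_eventually_abs_sub_lt hpos hω

/-- strong law for weighted sums of squares of i.i.d. standard
normals: if the nonnegative weights are uniformly bounded and the row sums
`Sₙ` tend to infinity at least polynomially, then `(1/Sₙ) ∑ cₙᵢ Wᵢ² → 1` a.s. -/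
theorem stmt5
    {Ω : Type*} [MeasureSpace Ω] [IsProbabilityMeasure (ℙ : Measure Ω)]
    (W : ℕ → Ω → ℝ)
    (hWmeas : ∀ i, Measurable (W i))
    (hWindep : iIndepFun W ℙ)
    (hWgauss : ∀ i, Measure.map (W i) ℙ = gaussianReal 0 1)
    (c : ℕ → ℕ → ℝ) (hc : ∀ (n i : ℕ), 0 ≤ c n i)
    (M : ℝ) (hM : ∀ (n i : ℕ), 1 ≤ i → i ≤ n → c n i ≤ M)
    (S : ℕ → ℝ) (hS : ∀ n, S n = ∑ i ∈ Finset.Icc 1 n, c n i)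
    (hStop : Tendsto S atTop atTop)
    (δ γ : ℝ) (hδ : 0 < δ) (hγ : 0 < γ)
    (hSlb : ∀ n : ℕ, 1 ≤ n → δ * (n : ℝ) ^ γ ≤ S n) :
    ∀ᵐ ω ∂(ℙ : Measure Ω),
      Tendsto (fun n => (1 / S n) * ∑ i ∈ Finset.Icc 1 n, c n i * (W i ω) ^ 2)
        atTop (nhds 1) :=
  stmt5_general W hWindep hWgauss c hc M hM S hS δ γ hδ hγ hSlb
end

section
/- Let $\sigma_1^2, \sigma_2^2, \phi_1, \phi_2, \nu, d > 0$ with $f_i(u) = \sigma_i^2\phi_i^{2\nu}/(\phi_i^2 + u^2)^{\nu + d/2}$. If $\sigma_1^2\phi_1^{2\nu} = \sigma_2^2\phi_2^{2\nu}$, then there exists a constant $C > 0$ such that $|f_1(u)/f_2(u) - 1| \le C/(1 + u^2)$ for all $u \ge 0$; consequently $\int_0^\infty u^{d-1} \left(\frac{f_1(u) - f_2(u)}{f_2(u)}\right)^2 du < \infty$ whenever $d \le 3$. -/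
/-!
With equal microergodic parameters the ratio `f₁ / f₂` is `((φ₂² + u²) / (φ₁² + u²)) ^ (ν + d / 2)`.
The base lies between `φ₂² / φ₁²` and `1` and differs from `1` by `O(1 / (1 + u²))`; as `x ↦ x ^ p`
is Lipschitz on that compact subinterval of `(0, ∞)`, the ratio obeys the same bound. Squaring, the
integrand is `O(u ^ (d - 1) / (1 + u²)²)`, which is integrable on `(0, ∞)` for `0 < d < 4`.
-/

open Real MeasureTheory Set

lemma exists_lipschitzOnWith_rpow_const_Icc (p : ℝ) {a b : ℝ} (ha : 0 < a) :
    ∃ K, LipschitzOnWith K (fun x : ℝ => x ^ p) (Icc a b) :=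
  ContDiffOn.exists_lipschitzOnWith
    (fun _ hx => (contDiffAt_rpow_const_of_ne (ha.trans_le hx.1).ne').contDiffWithinAt)
    one_ne_zero (convex_Icc a b) isCompact_Icc

lemma div_rpow_div_div_rpow {A : ℝ} (hA : A ≠ 0) {x y : ℝ} (hx : 0 ≤ x) (hy : 0 ≤ y) (p : ℝ) :
    A / x ^ p / (A / y ^ p) = (y / x) ^ p := by
  rw [div_rpow hy hx, div_div_div_comm, div_self hA, one_div_div]

lemma add_div_add_mem_uIcc {c₁ c₂ t : ℝ} (hc₁ : 0 < c₁) (ht : 0 ≤ t) :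
    (c₂ + t) / (c₁ + t) ∈ uIcc (c₂ / c₁) 1 := by
  have hc₁t : 0 < c₁ + t := by positivity
  rcases le_total c₂ c₁ with h | h
  · rw [uIcc_of_le ((div_le_one hc₁).2 h), mem_Icc, div_le_div_iff₀ hc₁ hc₁t, div_le_one hc₁t]
    constructor <;> nlinarith
  · rw [uIcc_of_ge ((one_le_div hc₁).2 h), mem_Icc, div_le_div_iff₀ hc₁t hc₁, one_le_div hc₁t]
    constructor <;> nlinarith

lemma abs_add_div_add_sub_one_le {c₁ c₂ t : ℝ} (hc₁ : 0 < c₁) (ht : 0 ≤ t) :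
    |(c₂ + t) / (c₁ + t) - 1| ≤ |c₂ - c₁| / min c₁ 1 / (1 + t) := by
  have hc₁t : 0 < c₁ + t := by positivity
  have hden : min c₁ 1 * (1 + t) ≤ c₁ + t := by
    nlinarith [min_le_left c₁ 1, mul_le_mul_of_nonneg_right (min_le_right c₁ 1) ht]
  rw [div_sub_one hc₁t.ne', abs_div, abs_of_pos hc₁t, add_sub_add_right_eq_sub, div_div]
  exact div_le_div_of_nonneg_left (abs_nonneg _) (by positivity) hden

lemma exists_abs_rpow_add_div_add_sub_one_le {c₁ c₂ : ℝ} (hc₁ : 0 < c₁) (hc₂ : 0 < c₂) (p : ℝ) :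
    ∃ C, 0 < C ∧ ∀ t, 0 ≤ t → |((c₂ + t) / (c₁ + t)) ^ p - 1| ≤ C / (1 + t) := by
  obtain ⟨K, hK⟩ := exists_lipschitzOnWith_rpow_const_Icc p
    (lt_min (div_pos hc₂ hc₁) one_pos : 0 < min (c₂ / c₁) 1) (b := max (c₂ / c₁) 1)
  refine ⟨K * (|c₂ - c₁| / min c₁ 1) + 1, by positivity, fun t ht => ?_⟩
  calc |((c₂ + t) / (c₁ + t)) ^ p - 1|
      = dist (((c₂ + t) / (c₁ + t)) ^ p) ((1 : ℝ) ^ p) := by rw [one_rpow, dist_eq]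
    _ ≤ K * dist ((c₂ + t) / (c₁ + t)) 1 :=
        hK.dist_le_mul _ (add_div_add_mem_uIcc hc₁ ht) _ right_mem_uIcc
    _ ≤ K * (|c₂ - c₁| / min c₁ 1 / (1 + t)) := by
        rw [dist_eq]; gcongr; exact abs_add_div_add_sub_one_le hc₁ ht
    _ ≤ (K * (|c₂ - c₁| / min c₁ 1) + 1) / (1 + t) := by
        rw [← mul_div_assoc]; gcongr; linarith

lemma integrableOn_Ioi_rpow_div_one_add_sq_sq {s : ℝ} (hs₀ : -1 < s) (hs₃ : s < 3) :
    IntegrableOn (fun u : ℝ => u ^ s / (1 + u ^ 2) ^ 2) (Ioi 0) := by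
  have hmeas : Measurable fun u : ℝ => u ^ s / (1 + u ^ 2) ^ 2 := by fun_prop
  rw [← Ioc_union_Ioi_eq_Ioi zero_le_one]
  refine IntegrableOn.union ?_ ?_
  · refine Integrable.mono' ((intervalIntegrable_iff_integrableOn_Ioc_of_le zero_le_one).1
      (intervalIntegral.intervalIntegrable_rpow' hs₀)) hmeas.aestronglyMeasurable ?_
    filter_upwards [ae_restrict_mem measurableSet_Ioc] with u hu
    rw [Real.norm_of_nonneg (by have := hu.1.le; positivity)]
    exact div_le_self (rpow_nonneg hu.1.le s) (one_le_pow₀ (by nlinarith))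
  · refine Integrable.mono' (integrableOn_Ioi_rpow_of_lt (by linarith : s - 4 < -1) one_pos)
      hmeas.aestronglyMeasurable ?_
    filter_upwards [ae_restrict_mem measurableSet_Ioi] with u (hu : 1 < u)
    have hu₀ : 0 < u := one_pos.trans hu
    rw [Real.norm_of_nonneg (by positivity), rpow_sub hu₀, show (4 : ℝ) = (4 : ℕ) by norm_num,
      rpow_natCast]
    gcongr
    nlinarith

theorem stmt13_general
    (σ1sq σ2sq φ1 φ2 ν d : ℝ)
    (hσ2 : 0 < σ2sq) (hφ1 : 0 < φ1) (hφ2 : 0 < φ2)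
    (hd : 0 < d)
    (hmicro : σ1sq * φ1 ^ (2 * ν) = σ2sq * φ2 ^ (2 * ν)) :
    (∃ C : ℝ, 0 < C ∧ ∀ u : ℝ, 0 ≤ u →
      |(σ1sq * φ1 ^ (2 * ν) / (φ1 ^ 2 + u ^ 2) ^ (ν + d / 2)) /
        (σ2sq * φ2 ^ (2 * ν) / (φ2 ^ 2 + u ^ 2) ^ (ν + d / 2)) - 1|
        ≤ C / (1 + u ^ 2)) ∧
    (d ≤ 3 → IntegrableOn (fun u : ℝ =>
        u ^ (d - 1) *
          (((σ1sq * φ1 ^ (2 * ν) / (φ1 ^ 2 + u ^ 2) ^ (ν + d / 2)) -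
            (σ2sq * φ2 ^ (2 * ν) / (φ2 ^ 2 + u ^ 2) ^ (ν + d / 2))) /
           (σ2sq * φ2 ^ (2 * ν) / (φ2 ^ 2 + u ^ 2) ^ (ν + d / 2))) ^ 2)
        (Set.Ioi (0 : ℝ)) volume) := by
  set p := ν + d / 2
  have hf₂ (u : ℝ) : 0 < σ2sq * φ2 ^ (2 * ν) / (φ2 ^ 2 + u ^ 2) ^ p := by positivity
  obtain ⟨C, hC, hbound⟩ := exists_abs_rpow_add_div_add_sub_one_le (pow_pos hφ1 2) (pow_pos hφ2 2) p
  have htail (u : ℝ) :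
      |σ1sq * φ1 ^ (2 * ν) / (φ1 ^ 2 + u ^ 2) ^ p /
        (σ2sq * φ2 ^ (2 * ν) / (φ2 ^ 2 + u ^ 2) ^ p) - 1| ≤ C / (1 + u ^ 2) := by
    rw [hmicro, div_rpow_div_div_rpow (by positivity) (by positivity) (by positivity)]
    exact hbound _ (sq_nonneg u)
  refine ⟨⟨C, hC, fun u _ => htail u⟩, fun hd₃ => ?_⟩
  have hdom := (integrableOn_Ioi_rpow_div_one_add_sq_sq (s := d - 1) (by linarith)
    (by linarith)).const_mul (C ^ 2)
  refine hdom.mono' (by fun_prop : Measurable _).aestronglyMeasurable ?_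
  filter_upwards [ae_restrict_mem measurableSet_Ioi] with u (hu : 0 < u)
  rw [sub_div, div_self (hf₂ u).ne', norm_mul, norm_pow, Real.norm_of_nonneg (by positivity),
    Real.norm_eq_abs]
  calc u ^ (d - 1) * |_ - 1| ^ 2 ≤ u ^ (d - 1) * (C / (1 + u ^ 2)) ^ 2 := by
        gcongr; exact htail u
    _ = C ^ 2 * (u ^ (d - 1) / (1 + u ^ 2) ^ 2) := by rw [div_pow]; ring

/-- quantitative tail estimate for the ratio of two Matérn spectral
densities with equal microergodic parameter, and the resulting integrability
criterion in dimension `d ≤ 3`. -/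
theorem stmt13
    (σ1sq σ2sq φ1 φ2 ν d : ℝ)
    (hσ1 : 0 < σ1sq) (hσ2 : 0 < σ2sq) (hφ1 : 0 < φ1) (hφ2 : 0 < φ2)
    (hν : 0 < ν) (hd : 0 < d)
    (hmicro : σ1sq * φ1 ^ (2 * ν) = σ2sq * φ2 ^ (2 * ν)) :
    (∃ C : ℝ, 0 < C ∧ ∀ u : ℝ, 0 ≤ u →
      |(σ1sq * φ1 ^ (2 * ν) / (φ1 ^ 2 + u ^ 2) ^ (ν + d / 2)) /
        (σ2sq * φ2 ^ (2 * ν) / (φ2 ^ 2 + u ^ 2) ^ (ν + d / 2)) - 1|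
        ≤ C / (1 + u ^ 2)) ∧
    (d ≤ 3 → IntegrableOn (fun u : ℝ =>
        u ^ (d - 1) *
          (((σ1sq * φ1 ^ (2 * ν) / (φ1 ^ 2 + u ^ 2) ^ (ν + d / 2)) -
            (σ2sq * φ2 ^ (2 * ν) / (φ2 ^ 2 + u ^ 2) ^ (ν + d / 2))) /
           (σ2sq * φ2 ^ (2 * ν) / (φ2 ^ 2 + u ^ 2) ^ (ν + d / 2))) ^ 2)
        (Set.Ioi (0 : ℝ)) volume) :=
  stmt13_general σ1sq σ2sq φ1 φ2 ν d hσ2 hφ1 hφ2 hd hmicro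
end
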